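/- Let 0 < ε ≤ 1/2, S > 0, k ≥ 1, and let D be an instance of n(D) items with sizes in (0, S]. Call an item small if its size is at most max{1/n(D), ε}·S and large otherwise; let I and J be the small and large sub-instances. Apply linear grouping to J with group cardinality g = ⌈n(J)·ε²⌉, producing U' (the group of the g largest items) and U'' (the remaining groups with sizes rounded up to each group's maximum). Consider any packing of D_k obtained by the following procedure: (1) pack each item copy of U'_k into its own bin (at most g·k bins); (2) take a solution x ≥ 0 of the fractional configuration linear program for U''_k with value 1·x ≤ LIN(U''_k) + 1 and at most m(U'') nonzero coordinates, and round it to an integer solution using at most 1·x + (m(U'') + k)/2 bins; (3) reduce the rounded sizes back to obtain a packing of J_k; and (4) greedily add the small items of I_k, placing each copy in the first bin with enough remaining capacity not containing another copy of the same item and opening a new bin only when no such bin exists. Then the resulting k-times packing of D_k uses at most (1 + 2kε)·OPT(D_k) + 1/(2ε²) + 2k + 1 bins. -/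

import Mathlib

/-!
Write `OPT` for `kOPTF d S k` and `τ = max {1/n, ε}·S`. Every large item has size more than `εS`,
so a volume count gives `n(J)·ε·k ≤ OPT`, and the `g·k` bins of `U'_k` cost at most `ε·OPT + k`.
Linear grouping rounds the `j`-th item of `U''` up to at most the size of the `j`-th largest
item of `J`; by Hall's theorem `U''` embeds item-by-item below `J`, so an optimal `k`-packing of
`D` induces a fractional solution for `U''_k` and `LIN(U''_k) ≤ OPT`. As `U''` has at most
`n(J)/g ≤ 1/ε²` distinct sizes, the packing of `J_k` uses at most
`(1 + ε)·OPT + 1/(2ε²) + 3k/2 + 1` bins.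

If First Fit opens a new bin, the last item `i₀` to do so (of size at most `τ`) fits into no bin
lacking a copy of it, and this persists. Exactly `k` bins hold a copy of `i₀`; all others are
filled beyond `S - τ`, whence `(L - k)(1 - θ) ≤ OPT` for `θ = τ/S`. When `n ≥ 2`, `θ ≤ 1/2` gives
`L - k ≤ (1 + 2θ)·OPT`, and `θ·OPT ≤ max {ε·OPT, k}` because `OPT ≤ n·k`. Moreover all bins are
nonempty, so `L ≤ n·k`, which settles `n = 1`.
-/

/-- One step of First-Fit insertion for `k`-times bin packing: insert (a copy of)
item `i` of size `d i` into the first bin that has enough remaining capacity and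
does not already contain another copy of item `i`; open a new bin otherwise. -/
noncomputable def ffInsertF {n : ℕ} (d : Fin n → ℝ) (S : ℝ) (i : Fin n) :
    List (Finset (Fin n)) → List (Finset (Fin n))
  | [] => [{i}]
  | b :: bs =>
      if (∑ j ∈ b, d j) + d i ≤ S ∧ i ∉ b then insert i b :: bs
      else b :: ffInsertF d S i bs

/-- `OPT(D_k)`: the minimum number `q` of bins of a `k`-times packing of the
instance `d : Fin n → ℝ` with capacity `S`. -/
noncomputable def kOPTF {n : ℕ} (d : Fin n → ℝ) (S : ℝ) (k : ℕ) : ℕ :=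
  sInf {q | ∃ B : Fin q → Finset (Fin n),
    (∀ j, ∑ i ∈ B j, d i ≤ S) ∧
    (∀ i, (Finset.univ.filter fun j => i ∈ B j).card = k)}

/-- `LIN(E_k)`: the optimal value of the fractional configuration linear program
for `k`-times bin packing of the instance `e : Fin p → ℝ`, with configurations
given as subsets `C` of items of total size at most `S`: minimize `∑_C x C` over
real `x ≥ 0` supported on feasible configurations with
`∑_{C ∋ i} x C = k` for every item `i`. -/
noncomputable def kLINset {p : ℕ} (e : Fin p → ℝ) (S : ℝ) (k : ℕ) : ℝ :=
  sInf {v : ℝ | ∃ x : Finset (Fin p) → ℝ,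
    (∀ C, 0 ≤ x C) ∧
    (∀ C, x C ≠ 0 → ∑ i ∈ C, e i ≤ S) ∧
    (∀ i, ∑ C ∈ Finset.univ, (if i ∈ C then x C else 0) = (k : ℝ)) ∧
    v = ∑ C ∈ Finset.univ, x C}

namespace KBinPacking

section FirstFit

variable {n : ℕ} (d : Fin n → ℝ) (S : ℝ)

theorem ffInsertF_cases (i : Fin n) (bs : List (Finset (Fin n))) :
    (∃ l₁ b l₂, bs = l₁ ++ b :: l₂ ∧ ffInsertF d S i bs = l₁ ++ insert i b :: l₂ ∧
      (∑ j ∈ b, d j) + d i ≤ S ∧ i ∉ b) ∨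
    (ffInsertF d S i bs = bs ++ [{i}] ∧ ∀ b ∈ bs, ¬((∑ j ∈ b, d j) + d i ≤ S ∧ i ∉ b)) := by
  induction bs with
  | nil => exact Or.inr ⟨rfl, by simp⟩
  | cons b bs ih =>
    by_cases h : (∑ j ∈ b, d j) + d i ≤ S ∧ i ∉ b
    · exact Or.inl ⟨[], b, bs, rfl, by simp [ffInsertF, h], h⟩
    · rcases ih with ⟨l₁, b', l₂, rfl, h₂, h₃⟩ | ⟨h₁, h₂⟩
      · exact Or.inl ⟨b :: l₁, b', l₂, rfl, by simp [ffInsertF, h, h₂], h₃⟩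
      · refine Or.inr ⟨by simp [ffInsertF, h, h₁], ?_⟩
        intro b' hb'
        rcases List.mem_cons.1 hb' with rfl | hb'
        exacts [h, h₂ b' hb']

theorem countP_ffInsertF (i j : Fin n) (bs : List (Finset (Fin n))) :
    (ffInsertF d S i bs).countP (fun b => decide (j ∈ b)) =
      bs.countP (fun b => decide (j ∈ b)) + if j = i then 1 else 0 := by
  rcases ffInsertF_cases d S i bs with ⟨l₁, b, l₂, rfl, h, -, hib⟩ | ⟨h, -⟩
  · rw [h]
    by_cases hji : j = i
    · subst hji; simp [List.countP_append, hib, Nat.add_assoc]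
    · simp [List.countP_append, List.countP_cons, hji]
  · rw [h]
    by_cases hji : j = i <;> simp [List.countP_append, hji]

theorem countP_foldl_ffInsertF (order : List (Fin n)) (bs : List (Finset (Fin n))) (j : Fin n) :
    (order.foldl (fun bs i => ffInsertF d S i bs) bs).countP (fun b => decide (j ∈ b)) =
      bs.countP (fun b => decide (j ∈ b)) + order.count j := by
  induction order generalizing bs with
  | nil => simp
  | cons a order ih =>
    rw [List.foldl_cons, ih, countP_ffInsertF, List.count_cons]
    by_cases hja : j = a
    · simp [hja, Nat.add_assoc, Nat.add_comm]
    · simp [hja, Ne.symm hja]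

def Blocked (i₀ : Fin n) (bs : List (Finset (Fin n))) : Prop :=
  ∀ b ∈ bs, i₀ ∈ b ∨ S < (∑ j ∈ b, d j) + d i₀

theorem length_ffInsertF_le_or_blocked (hd : ∀ i, 0 ≤ d i) {L₀ : ℕ} {t : ℝ} {i : Fin n}
    (hi : d i ≤ t) {bs : List (Finset (Fin n))}
    (h : bs.length ≤ L₀ ∨ ∃ i₀, d i₀ ≤ t ∧ Blocked d S i₀ bs) :
    (ffInsertF d S i bs).length ≤ L₀ ∨
      ∃ i₀, d i₀ ≤ t ∧ Blocked d S i₀ (ffInsertF d S i bs) := by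
  rcases ffInsertF_cases d S i bs with ⟨l₁, b, l₂, rfl, hins, -, hib⟩ | ⟨hnew, hfull⟩
  · rw [hins]
    refine h.imp (fun h => by simpa using h) fun ⟨i₀, hi₀, hblk⟩ => ⟨i₀, hi₀, ?_⟩
    intro b' hb'
    simp only [List.mem_append, List.mem_cons] at hb'
    rcases hb' with hb' | rfl | hb'
    · exact hblk b' (by simp [hb'])
    · rw [Finset.sum_insert hib, Finset.mem_insert]
      rcases hblk b (by simp) with hmem | hlt
      · exact Or.inl (Or.inr hmem)
      · exact Or.inr (by linarith [hd i])
    · exact hblk b' (by simp [hb'])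
  · refine Or.inr ⟨i, hi, ?_⟩
    rw [hnew]
    intro b hb
    rcases List.mem_append.1 hb with hb | hb
    · by_cases hib : i ∈ b
      · exact Or.inl hib
      · exact Or.inr (lt_of_not_ge fun hle => hfull b hb ⟨hle, hib⟩)
    · simp_all

theorem length_foldl_ffInsertF_le_or_blocked (hd : ∀ i, 0 ≤ d i) {t : ℝ}
    (order : List (Fin n)) (hord : ∀ i ∈ order, d i ≤ t) (bs : List (Finset (Fin n))) :
    (order.foldl (fun bs i => ffInsertF d S i bs) bs).length ≤ bs.length ∨
      ∃ i₀, d i₀ ≤ t ∧ Blocked d S i₀ (order.foldl (fun bs i => ffInsertF d S i bs) bs) := by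
  suffices ∀ {L₀ : ℕ} (bs : List (Finset (Fin n))),
      (bs.length ≤ L₀ ∨ ∃ i₀, d i₀ ≤ t ∧ Blocked d S i₀ bs) →
      ((order.foldl (fun bs i => ffInsertF d S i bs) bs).length ≤ L₀ ∨
        ∃ i₀, d i₀ ≤ t ∧ Blocked d S i₀ (order.foldl (fun bs i => ffInsertF d S i bs) bs)) from
    this bs (Or.inl le_rfl)
  induction order with
  | nil => exact fun _ h => h
  | cons a order ih =>
    intro L₀ bs h
    exact ih (fun i hi => hord i (List.mem_cons_of_mem a hi)) _
      (length_ffInsertF_le_or_blocked d S hd (hord a List.mem_cons_self) h)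

theorem sum_map_sum_eq_sum_mul_countP {R : Type*} [CommSemiring R] (f : Fin n → R)
    (bs : List (Finset (Fin n))) :
    (bs.map fun b => ∑ j ∈ b, f j).sum = ∑ i, f i * bs.countP (fun b => decide (i ∈ b)) := by
  induction bs with
  | nil => simp
  | cons b bs ih =>
    simp only [List.map_cons, List.sum_cons, ih, List.countP_cons, Nat.cast_add, mul_add,
      Finset.sum_add_distrib, add_comm]
    congr 1
    simp [Finset.sum_ite_mem]

theorem sum_map_ite_mem (i₀ : Fin n) (c : ℝ) (bs : List (Finset (Fin n))) :
    (bs.map fun b => if i₀ ∈ b then 0 else c).sum =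
      ((bs.length : ℝ) - bs.countP (fun b => decide (i₀ ∈ b))) * c := by
  induction bs with
  | nil => simp
  | cons b bs ih =>
    rw [List.map_cons, List.sum_cons, ih, List.length_cons, List.countP_cons]
    simp only [decide_eq_true_eq]
    split_ifs <;> push_cast <;> ring

variable {d S} {k : ℕ} {i₀ : Fin n} {bs : List (Finset (Fin n))}

theorem Blocked.sub_mul_le_sum (h : Blocked d S i₀ bs) (hd : ∀ i, 0 ≤ d i)
    (hcount : ∀ i, bs.countP (fun b => decide (i ∈ b)) = k) {t : ℝ} (hi₀ : d i₀ ≤ t) :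
    ((bs.length : ℝ) - k) * (S - t) ≤ ∑ i, d i * k := by
  have hk : (k : ℝ) ≤ bs.length := by exact_mod_cast hcount i₀ ▸ List.countP_le_length
  have hbin : ∀ b ∈ bs, (if i₀ ∈ b then 0 else S - d i₀) ≤ ∑ j ∈ b, d j := by
    intro b hb
    split_ifs with hi
    · exact Finset.sum_nonneg fun j _ => hd j
    · exact (sub_le_iff_le_add.2 ((h b hb).resolve_left hi).le)
  calc ((bs.length : ℝ) - k) * (S - t) ≤ ((bs.length : ℝ) - k) * (S - d i₀) := by gcongr
    _ = (bs.map fun b => if i₀ ∈ b then 0 else S - d i₀).sum := by rw [sum_map_ite_mem, hcount]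
    _ ≤ (bs.map fun b => ∑ j ∈ b, d j).sum := List.sum_le_sum hbin
    _ = ∑ i, d i * k := by simp only [sum_map_sum_eq_sum_mul_countP, hcount]

theorem Blocked.length_le (h : Blocked d S i₀ bs) (hi₀ : d i₀ ≤ S)
    (hcount : ∀ i, bs.countP (fun b => decide (i ∈ b)) = k) : bs.length ≤ n * k := by
  have hne : ∀ b ∈ bs, 1 ≤ b.card := by
    intro b hb
    refine Finset.one_le_card.2 ?_
    rcases h b hb with hi | hlt
    · exact ⟨i₀, hi⟩
    · by_contra hb
      simp only [Finset.not_nonempty_iff_eq_empty.1 hb, Finset.sum_empty, zero_add] at hlt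
      linarith
  calc bs.length = (bs.map Finset.card).length := (List.length_map _).symm
    _ ≤ (bs.map Finset.card).sum := List.length_le_sum_of_one_le _ (by simpa using hne)
    _ = n * k := by
      simpa [hcount, mul_comm] using sum_map_sum_eq_sum_mul_countP (fun _ => (1 : ℕ)) bs

end FirstFit

section Packing

variable {n : ℕ} (d : Fin n → ℝ) (S : ℝ)

def IsKPacking {q : ℕ} (k : ℕ) (B : Fin q → Finset (Fin n)) : Prop :=
  (∀ j, ∑ i ∈ B j, d i ≤ S) ∧ ∀ i, (Finset.univ.filter fun j => i ∈ B j).card = k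

theorem isKPacking_singletons (hdS : ∀ i, d i ≤ S) (k : ℕ) :
    IsKPacking d S k fun j : Fin (n * k) => {(finProdFinEquiv.symm j).1} := by
  refine ⟨fun j => by simpa using hdS _, fun i => ?_⟩
  calc (Finset.univ.filter fun j : Fin (n * k) =>
          i ∈ ({(finProdFinEquiv.symm j).1} : Finset _)).card
      = (Finset.univ.filter fun p : Fin n × Fin k => p.1 = i).card := by
        refine Finset.card_equiv finProdFinEquiv.symm fun j => ?_
        simp [eq_comm]
    _ = ({i} ×ˢ Finset.univ : Finset (Fin n × Fin k)).card := by congr 1; ext ⟨a, b⟩; simp [eq_comm]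
    _ = k := by simp

variable {d S} {k : ℕ}

theorem exists_isKPacking_kOPTF (hdS : ∀ i, d i ≤ S) :
    ∃ B : Fin (kOPTF d S k) → Finset (Fin n), IsKPacking d S k B :=
  Nat.sInf_mem (s := {q | ∃ B : Fin q → Finset (Fin n), IsKPacking d S k B})
    ⟨n * k, _, isKPacking_singletons d S hdS k⟩

theorem kOPTF_le (hdS : ∀ i, d i ≤ S) : kOPTF d S k ≤ n * k :=
  Nat.sInf_le ⟨_, isKPacking_singletons d S hdS k⟩

theorem IsKPacking.le {q : ℕ} {B : Fin q → Finset (Fin n)} (hB : IsKPacking d S k B)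
    (i : Fin n) : k ≤ q :=
  hB.2 i ▸ (Finset.card_filter_le _ _).trans_eq (Finset.card_fin q)

theorem IsKPacking.sum_mul_le {q : ℕ} {B : Fin q → Finset (Fin n)} (hB : IsKPacking d S k B) :
    ∑ i, d i * k ≤ q * S := by
  calc ∑ i, d i * k = ∑ i, ∑ j : Fin q, if i ∈ B j then d i else 0 := by
        refine Finset.sum_congr rfl fun i _ => ?_
        rw [← Finset.sum_filter, Finset.sum_const, hB.2 i, nsmul_eq_mul, mul_comm]
    _ = ∑ j : Fin q, ∑ i ∈ B j, d i := by
        rw [Finset.sum_comm]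
        simp only [Finset.sum_ite_mem, Finset.univ_inter]
    _ ≤ ∑ _j : Fin q, S := Finset.sum_le_sum fun j _ => hB.1 j
    _ = q * S := by simp

theorem le_kOPTF (hdS : ∀ i, d i ≤ S) (i : Fin n) : k ≤ kOPTF d S k :=
  (exists_isKPacking_kOPTF hdS).choose_spec.le i

theorem sum_mul_le_kOPTF (hdS : ∀ i, d i ≤ S) : ∑ i, d i * k ≤ kOPTF d S k * S :=
  (exists_isKPacking_kOPTF hdS).choose_spec.sum_mul_le

theorem card_mul_mul_le_kOPTF (hd : ∀ i, 0 ≤ d i) (hdS : ∀ i, d i ≤ S)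
    {F : Finset (Fin n)} {c : ℝ} (hc : ∀ i ∈ F, c ≤ d i) :
    (F.card : ℝ) * c * k ≤ kOPTF d S k * S := by
  calc (F.card : ℝ) * c * k ≤ (∑ i ∈ F, d i) * k := by
        gcongr
        simpa using Finset.card_nsmul_le_sum F d c hc
    _ ≤ (∑ i, d i) * k := by
        gcongr
        · exact fun i _ _ => hd i
        · exact Finset.subset_univ F
    _ = ∑ i, d i * k := Finset.sum_mul _ _ _
    _ ≤ kOPTF d S k * S := sum_mul_le_kOPTF hdS

theorem kLINset_le_of_isKPacking {N q : ℕ} (e : Fin N → ℝ) (hd : ∀ i, 0 ≤ d i)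
    {B : Fin q → Finset (Fin n)} (hB : IsKPacking d S k B) {ι : Fin N → Fin n}
    (hι : Function.Injective ι) (he : ∀ j, e j ≤ d (ι j)) : kLINset e S k ≤ q := by
  classical
  set C : Fin q → Finset (Fin N) := fun b => Finset.univ.filter fun j => ι j ∈ B b
  refine csInf_le ⟨0, ?_⟩ ⟨fun c => ((Finset.univ.filter fun b => C b = c).card : ℝ),
    fun c => Nat.cast_nonneg _, ?_, fun j => ?_, ?_⟩
  · rintro v ⟨x, hx, -, -, rfl⟩
    exact Finset.sum_nonneg fun c _ => hx c
  · intro c hc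
    obtain ⟨b, -, rfl⟩ : ∃ b, b ∈ Finset.univ ∧ C b = c := by
      simpa [Finset.filter_nonempty_iff] using hc
    calc ∑ j ∈ C b, e j ≤ ∑ j ∈ C b, d (ι j) := Finset.sum_le_sum fun j _ => he j
      _ = ∑ i ∈ (C b).map ⟨ι, hι⟩, d i := by rw [Finset.sum_map]; rfl
      _ ≤ ∑ i ∈ B b, d i := Finset.sum_le_sum_of_subset_of_nonneg
          (fun i hi => by
            obtain ⟨j, hj, rfl⟩ := Finset.mem_map.1 hi
            exact (Finset.mem_filter.1 hj).2) fun i _ _ => hd i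
      _ ≤ S := hB.1 b
  · have hfib := Finset.card_eq_sum_card_fiberwise
      (s := Finset.univ.filter fun b => j ∈ C b) (t := Finset.univ) (f := C)
      fun _ _ => Finset.mem_univ _
    have hk : (Finset.univ.filter fun b => j ∈ C b).card = k := by simpa [C] using hB.2 (ι j)
    rw [hk] at hfib
    rw [hfib, Nat.cast_sum]
    refine Finset.sum_congr rfl fun c _ => ?_
    split_ifs with hjc
    · rw [Finset.filter_filter]
      refine congrArg (fun s : Finset (Fin q) => (s.card : ℝ)) (Finset.filter_congr fun b _ => ?_)
      exact ⟨fun h => ⟨h ▸ hjc, h⟩, And.right⟩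
    · rw [eq_comm, Nat.cast_eq_zero, Finset.card_eq_zero, Finset.filter_filter]
      exact Finset.filter_eq_empty_iff.2 fun b _ h => hjc (h.2 ▸ h.1)
  · rw [← Nat.cast_sum, ← Finset.card_eq_sum_card_fiberwise fun _ _ => Finset.mem_univ _,
      Finset.card_univ, Fintype.card_fin]

theorem exists_injective_le_of_add_one_le_card {N : ℕ} (e : Fin N → ℝ) (F : Finset (Fin n))
    (he : ∀ j : Fin N, (j : ℕ) + 1 ≤ (F.filter fun i => e j ≤ d i).card) :
    ∃ ι : Fin N → Fin n, Function.Injective ι ∧ ∀ j, e j ≤ d (ι j) := by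
  classical
  set t : Fin N → Finset (Fin n) := fun j => F.filter fun i => e j ≤ d i
  -- Hall's condition for `s` is witnessed by the single index `max s`.
  have hall : ∀ s : Finset (Fin N), s.card ≤ (s.biUnion t).card := by
    intro s
    rcases s.eq_empty_or_nonempty with rfl | hs
    · simp
    calc s.card ≤ (Finset.Iic (s.max' hs)).card :=
          Finset.card_le_card fun j hj => Finset.mem_Iic.2 (s.le_max' j hj)
      _ = (s.max' hs : ℕ) + 1 := Fin.card_Iic _
      _ ≤ (t (s.max' hs)).card := he _
      _ ≤ (s.biUnion t).card := Finset.card_le_card (Finset.subset_biUnion_of_mem t (s.max'_mem hs))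
  obtain ⟨ι, hι, hιt⟩ := (Finset.all_card_le_biUnion_card_iff_exists_injective t).1 hall
  exact ⟨ι, hι, fun j => (Finset.mem_filter.1 (hιt j)).2⟩

theorem kLINset_le_kOPTF {N : ℕ} (e : Fin N → ℝ) (F : Finset (Fin n)) (hd : ∀ i, 0 ≤ d i)
    (hdS : ∀ i, d i ≤ S) (he : ∀ j : Fin N, (j : ℕ) + 1 ≤ (F.filter fun i => e j ≤ d i).card) :
    kLINset e S k ≤ kOPTF d S k := by
  obtain ⟨B, hB⟩ := exists_isKPacking_kOPTF (k := k) hdS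
  obtain ⟨ι, hι, hle⟩ := exists_injective_le_of_add_one_le_card e F he
  exact kLINset_le_of_isKPacking e hd hB hι hle

end Packing

section LinearGrouping

variable {n : ℕ} {d : Fin n → ℝ}

theorem groupHead_lt {m g : ℕ} (j : Fin (m - g)) : (j.val + g) / g * g < m :=
  Nat.lt_of_le_of_lt (Nat.div_mul_le_self _ _) (by have := j.isLt; omega)

/-- Linear grouping with groups `[q g, (q + 1) g)` of the nonincreasing list `a`: the first group
is dropped and item `j` of the result is item `j + g` of `a` rounded up to the head of its group. -/
def linearGrouping {m : ℕ} (a : Fin m → ℝ) (g : ℕ) : Fin (m - g) → ℝ :=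
  fun j => a ⟨(j.val + g) / g * g, groupHead_lt j⟩

variable {m : ℕ} {a : Fin m → ℝ}

theorem card_filter_le_eq_of_map_eq {F : Finset (Fin n)}
    (hperm : Multiset.map a Finset.univ.val = Multiset.map d F.val) (c : ℝ) :
    (F.filter fun i => c ≤ d i).card = (Finset.univ.filter fun j => c ≤ a j).card := by
  have h := Multiset.countP_map a Finset.univ.val (c ≤ ·)
  rw [hperm, Multiset.countP_map] at h
  exact h

theorem add_one_le_card_filter_of_antitone (ha : Antitone a) (p : Fin m) :
    (p : ℕ) + 1 ≤ (Finset.univ.filter fun j => a p ≤ a j).card := by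
  rw [← Fin.card_Iic]
  exact Finset.card_le_card fun j hj => by simpa using ha (Finset.mem_Iic.1 hj)

theorem add_one_le_card_filter_linearGrouping {F : Finset (Fin n)} (ha : Antitone a)
    (hperm : Multiset.map a Finset.univ.val = Multiset.map d F.val) {g : ℕ} (hg : 0 < g)
    (j : Fin (m - g)) :
    (j : ℕ) + 1 ≤ (F.filter fun i => linearGrouping a g j ≤ d i).card := by
  have hj : (j : ℕ) < (j + g) / g * g := by
    have := Nat.lt_div_mul_add (a := j + g) hg
    omega
  rw [card_filter_le_eq_of_map_eq hperm]
  exact (Nat.add_le_add_right hj.le 1).trans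
    (add_one_le_card_filter_of_antitone ha ⟨_, groupHead_lt j⟩)

theorem card_image_linearGrouping_mul_le (g : ℕ) :
    (Finset.univ.image (linearGrouping a g)).card * g ≤ m := by
  rcases Nat.eq_zero_or_pos g with rfl | hg
  · simp
  have hgroups : (Finset.univ.image (linearGrouping a g)).card ≤ (m - 1) / g := by
    calc _ ≤ (Finset.univ.image fun j : Fin (m - g) => (j + g) / g).card := by
          rw [show linearGrouping a g = (fun q => if h : q * g < m then a ⟨q * g, h⟩ else 0) ∘
              fun j : Fin (m - g) => (j + g) / g from ?_, ← Finset.image_image]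
          · exact Finset.card_image_le
          · funext j; simp only [Function.comp_apply, dif_pos (groupHead_lt j)]; rfl
      _ ≤ (Finset.Icc 1 ((m - 1) / g)).card := Finset.card_le_card fun q hq => by
          obtain ⟨j, -, rfl⟩ := Finset.mem_image.1 hq
          have := j.isLt
          exact Finset.mem_Icc.2 ⟨(Nat.le_div_iff_mul_le hg).2 (by omega),
            Nat.div_le_div_right (by omega)⟩
      _ = (m - 1) / g := by simp
  calc _ ≤ (m - 1) / g * g := Nat.mul_le_mul_right g hgroups
    _ ≤ m := (Nat.div_mul_le_self _ _).trans (Nat.sub_le m 1)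

theorem card_image_linearGrouping_mul_sq_le {g : ℕ} {ε : ℝ}
    (hg : (m : ℝ) * ε ^ 2 ≤ g) :
    ((Finset.univ.image (linearGrouping a g)).card : ℝ) * ε ^ 2 ≤ 1 := by
  set r := (Finset.univ.image (linearGrouping a g)).card
  have hrg : (r : ℝ) * g ≤ m := by exact_mod_cast card_image_linearGrouping_mul_le g
  rcases Nat.eq_zero_or_pos m with hm | hm
  · have : r = 0 := Nat.le_zero.1 ((Finset.card_image_le).trans (by simp [hm]))
    simp [this]
  refine le_of_mul_le_mul_left ?_ (Nat.cast_pos.2 hm)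
  calc (m : ℝ) * ((r : ℝ) * ε ^ 2) = (r : ℝ) * (m * ε ^ 2) := by ring
    _ ≤ (r : ℝ) * g := by gcongr
    _ ≤ (m : ℝ) * 1 := by linarith

end LinearGrouping

theorem large_items_bins_le {ε OPT X : ℝ} {nJ g m k L₁ L₂ : ℕ} (hε : 0 < ε)
    (hg : g = ⌈(nJ : ℝ) * ε ^ 2⌉₊) (hJ : (nJ : ℝ) * ε * k ≤ OPT) (hm : (m : ℝ) * ε ^ 2 ≤ 1)
    (hL₁ : L₁ ≤ g * k) (hL₂ : (L₂ : ℝ) ≤ X + ((m : ℝ) + k) / 2) (hX : X ≤ OPT + 1) :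
    ((L₁ + L₂ : ℕ) : ℝ) ≤ (1 + ε) * OPT + 1 / (2 * ε ^ 2) + 3 / 2 * k + 1 := by
  have hgR : (g : ℝ) ≤ nJ * ε ^ 2 + 1 := hg ▸ (Nat.ceil_lt_add_one (by positivity)).le
  have hL₁R : (L₁ : ℝ) ≤ ε * OPT + k :=
    calc (L₁ : ℝ) ≤ g * k := by exact_mod_cast hL₁
      _ ≤ (nJ * ε ^ 2 + 1) * k := by gcongr
      _ = ε * (nJ * ε * k) + k := by ring
      _ ≤ ε * OPT + k := by gcongr
  have hmR : (m : ℝ) / 2 ≤ 1 / (2 * ε ^ 2) := by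
    rw [div_le_div_iff₀ two_pos (by positivity)]
    linarith
  push_cast
  linarith

theorem blocked_bins_le {L OPT S ε : ℝ} {n k : ℕ} (hS : 0 < S) (hε : 0 < ε) (hε₂ : ε ≤ 1 / 2)
    (hk : 1 ≤ k) (hkO : (k : ℝ) ≤ OPT) (hOn : OPT ≤ n * k) (hLn : L ≤ n * k)
    (hvol : (L - k) * (S - max (1 / (n : ℝ)) ε * S) ≤ OPT * S) :
    L ≤ (1 + 2 * k * ε) * OPT + 1 / (2 * ε ^ 2) + (2 * k + 1) := by
  have hk₁ : (1 : ℝ) ≤ k := by exact_mod_cast hk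
  have hεO : 0 ≤ ε * OPT := mul_nonneg hε.le (by linarith)
  have hkεO : 0 ≤ 2 * k * ε * OPT := by nlinarith
  have hε₀ : 0 ≤ 1 / (2 * ε ^ 2) := by positivity
  have hk_le : (k : ℝ) ≤ 2 * k * ε * OPT + 1 / (2 * ε ^ 2) := by
    rcases le_or_gt 1 (2 * ε * k) with h | h
    · nlinarith
    · have : (k : ℝ) * (2 * ε ^ 2) ≤ 1 := by nlinarith [mul_lt_mul_of_pos_right h hε]
      linarith [(le_div_iff₀ (by positivity)).2 this]
  rcases le_or_gt n 1 with hn | hn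
  · have : (n : ℝ) ≤ 1 := by exact_mod_cast hn
    nlinarith
  have hn₂ : (2 : ℝ) ≤ n := by exact_mod_cast hn
  obtain ⟨θ, hθ⟩ : ∃ θ, θ = max (1 / (n : ℝ)) ε := ⟨_, rfl⟩
  rw [← hθ] at hvol
  have hθ₂ : θ ≤ 1 / 2 := hθ ▸ max_le (by rw [div_le_div_iff₀] <;> linarith) hε₂
  have hθ₀ : 0 < θ := hθ ▸ lt_max_of_lt_right hε
  -- `(1 + 2θ)(1 - θ) ≥ 1` for `0 ≤ θ ≤ 1/2`
  have hLk : L - k ≤ (1 + 2 * θ) * OPT := by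
    have h : (L - k) * (1 - θ) ≤ OPT := le_of_mul_le_mul_right (by linarith) hS
    by_contra! hc
    have h₁ := mul_lt_mul_of_pos_right hc (by linarith : (0 : ℝ) < 1 - θ)
    nlinarith [mul_nonneg (mul_nonneg hθ₀.le (by linarith : (0 : ℝ) ≤ 1 - 2 * θ)) hεO]
  have hθO : θ * OPT ≤ ε * OPT ∨ θ * OPT ≤ k := by
    rcases max_choice (1 / (n : ℝ)) ε with h | h <;> rw [← hθ] at h <;> rw [h]
    · right
      rw [one_div_mul_eq_div, div_le_iff₀ (by linarith)]
      linarith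
    · exact Or.inl le_rfl
  rcases hθO with h | h
  · nlinarith
  · linarith

theorem firstFit_bins_le {n : ℕ} {d : Fin n → ℝ} {S ε : ℝ} {k : ℕ} (hS : 0 < S) (hε : 0 < ε)
    (hε₂ : ε ≤ 1 / 2) (hk : 1 ≤ k) (hd : ∀ i, 0 ≤ d i) (hdS : ∀ i, d i ≤ S)
    {bs : List (Finset (Fin n))} {order : List (Fin n)}
    (hsmall : ∀ i ∈ order, d i ≤ max (1 / (n : ℝ)) ε * S)
    (hcount : ∀ i, bs.countP (fun b => decide (i ∈ b)) + order.count i = k)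
    (hbs : (bs.length : ℝ) ≤ (1 + ε) * kOPTF d S k + 1 / (2 * ε ^ 2) + 3 / 2 * k + 1) :
    ((order.foldl (fun bs i => ffInsertF d S i bs) bs).length : ℝ) ≤
      (1 + 2 * (k : ℝ) * ε) * (kOPTF d S k : ℝ) + 1 / (2 * ε ^ 2) + (2 * (k : ℝ) + 1) := by
  rcases length_foldl_ffInsertF_le_or_blocked d S hd order hsmall bs with hle | ⟨i₀, hi₀, hblk⟩
  · have : (_ : ℝ) ≤ bs.length := Nat.cast_le.2 hle
    have : (0 : ℝ) ≤ (k - 1) * (ε * kOPTF d S k) :=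
      mul_nonneg (by simpa using (Nat.one_le_cast (α := ℝ)).2 hk) (by positivity)
    nlinarith [one_div_nonneg.2 (by positivity : (0 : ℝ) ≤ 2 * ε ^ 2)]
  have hcount' : ∀ i, (order.foldl (fun bs i => ffInsertF d S i bs) bs).countP
      (fun b => decide (i ∈ b)) = k := fun i => (countP_foldl_ffInsertF d S _ _ i).trans (hcount i)
  refine blocked_bins_le hS hε hε₂ hk (by exact_mod_cast le_kOPTF hdS i₀)
    (by exact_mod_cast kOPTF_le hdS) (by exact_mod_cast hblk.length_le (hdS i₀) hcount') ?_
  exact (hblk.sub_mul_le_sum hd hcount' hi₀).trans (sum_mul_le_kOPTF hdS)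

end KBinPacking

open KBinPacking

/-- Karmarkar–Karp Algorithm 1 extended to `k`BP: with small items
those of size `≤ max{1/n(D), ε}·S` and `J` the large items (`nJ` of them, sorted
nonincreasingly as `dJ`), linear grouping with `g = ⌈nJ·ε²⌉` producing `U'` (the
`g` largest items) and `U''` (the remaining groups rounded up to each group's
maximum), `m''` the number of distinct sizes of `U''`; a fractional solution `x` of
the configuration LP for `U''_k` with value `∑ x ≤ LIN(U''_k) + 1` and at most
`m''` nonzero coordinates; `L1 ≤ g·k` bins for `U'_k`, an integral rounding of `x`
into `L2 ≤ ∑ x + (m'' + k)/2` bins, giving (after restoring the original sizes) a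
packing `bins0` of `J_k` into `L1 + L2` bins; finally the small items added
greedily by First-Fit insertion.  Then the resulting packing of `D_k` uses at most
`(1 + 2kε)·OPT(D_k) + 1/(2ε²) + 2k + 1` bins. -/
theorem stmt_19 {n : ℕ} (d : Fin n → ℝ) (S ε : ℝ) (hS : 0 < S)
    (hε : 0 < ε ∧ ε ≤ 1/2) (hd : ∀ i, 0 < d i ∧ d i ≤ S) (k : ℕ) (hk : 1 ≤ k)
    -- the large items, sorted in nonincreasing order
    (nJ : ℕ)
    (hnJ : nJ = (Finset.univ.filter
      fun i => max (1/(n : ℝ)) ε * S < d i).card)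
    (dJ : Fin nJ → ℝ) (hdJanti : Antitone dJ)
    (hdJperm : Multiset.map dJ Finset.univ.val =
      Multiset.map d (Finset.univ.filter
        fun i => max (1/(n : ℝ)) ε * S < d i).val)
    -- the grouping parameter
    (g : ℕ) (hg : g = ⌈(nJ : ℝ) * ε ^ 2⌉₊)
    -- the rounded instance U'' (remaining groups, rounded up to group maxima)
    (U'' : Fin (nJ - g) → ℝ)
    (hU'' : U'' = fun j => dJ ⟨(j.val + g) / g * g,
      Nat.lt_of_le_of_lt (Nat.div_mul_le_self _ _) (by have := j.isLt; omega)⟩)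
    -- the number of distinct item sizes of U''
    (m'' : ℕ) (hm'' : m'' = (Finset.univ.image U'').card)
    -- step 2: a near-optimal solution of the fractional configuration LP for U''_k
    (x : Finset (Fin (nJ - g)) → ℝ)
    (hxval : ∑ C ∈ Finset.univ, x C ≤ kLINset U'' S k + 1)
    -- steps 1-3: bins0 packs the large items of D, k copies each, into L1+L2 bins
    (L1 L2 : ℕ) (hL1 : L1 ≤ g * k)
    (hL2 : (L2 : ℝ) ≤ ∑ C ∈ Finset.univ, x C + ((m'' : ℝ) + k) / 2)
    (bins0 : List (Finset (Fin n))) (hlen : bins0.length = L1 + L2)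
    (hlarge0 : ∀ i : Fin n, max (1/(n : ℝ)) ε * S < d i →
      (bins0.countP fun b => decide (i ∈ b)) = k)
    (hsmall0 : ∀ i : Fin n, d i ≤ max (1/(n : ℝ)) ε * S →
      (bins0.countP fun b => decide (i ∈ b)) = 0)
    -- step 4: the small items, added greedily (k copies of each)
    (order : List (Fin n))
    (hordS : ∀ i : Fin n, d i ≤ max (1/(n : ℝ)) ε * S → order.count i = k)
    (hordL : ∀ i : Fin n, max (1/(n : ℝ)) ε * S < d i → order.count i = 0) :
    ((order.foldl (fun bs i => ffInsertF d S i bs) bins0).length : ℝ) ≤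
      (1 + 2 * (k : ℝ) * ε) * (kOPTF d S k : ℝ) + 1 / (2 * ε ^ 2) +
        (2 * (k : ℝ) + 1) := by
  obtain ⟨hε₀, hε₂⟩ := hε
  have hd₀ : ∀ i, 0 ≤ d i := fun i => (hd i).1.le
  have hdS : ∀ i, d i ≤ S := fun i => (hd i).2
  have hJ : (nJ : ℝ) * ε * k ≤ kOPTF d S k := by
    refine le_of_mul_le_mul_right ?_ hS
    calc (nJ : ℝ) * ε * k * S = nJ * (ε * S) * k := by ring
      _ ≤ kOPTF d S k * S := hnJ ▸ card_mul_mul_le_kOPTF hd₀ hdS fun i hi =>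
          (mul_le_mul_of_nonneg_right (le_max_right _ _) hS.le).trans (Finset.mem_filter.1 hi).2.le
  have hLIN : kLINset U'' S k ≤ kOPTF d S k := by
    subst hU''
    refine kLINset_le_kOPTF _ _ hd₀ hdS fun j =>
      add_one_le_card_filter_linearGrouping hdJanti hdJperm ?_ j
    have : 0 < nJ := by have := j.isLt; omega
    rw [hg, Nat.ceil_pos]
    positivity
  have hm : (m'' : ℝ) * ε ^ 2 ≤ 1 :=
    hm'' ▸ hU'' ▸ card_image_linearGrouping_mul_sq_le (hg ▸ Nat.le_ceil _)
  have hbins0 := large_items_bins_le hε₀ hg hJ hm hL1 hL2 (by linarith)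
  rw [← hlen] at hbins0
  have hsmall : ∀ i ∈ order, d i ≤ max (1 / (n : ℝ)) ε * S := fun i hi =>
    not_lt.1 fun h => (List.count_pos_iff.2 hi).ne' (hordL i h)
  refine firstFit_bins_le hS hε₀ hε₂ hk hd₀ hdS hsmall (fun i => ?_) hbins0
  rcases le_or_gt (d i) (max (1 / (n : ℝ)) ε * S) with h | h
  · rw [hsmall0 i h, hordS i h, zero_add]
  · rw [hlarge0 i h, hordL i h, add_zero]
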